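/- If the S-convolution is associative and 1 ∈ S, then for every prime p and every j ≥ 1 with p^j ∈ S, one has p^ℓ ∈ S for every ℓ > j. -/
import Mathlib

open Finset
open scoped Classical

/-- Characteristic function of `S` (complex-valued). -/
noncomputable def rho (S : Set ℕ) (n : ℕ) : ℂ :=
  if n ∈ S then 1 else 0

/-- The `S`-convolution of arithmetic functions. -/
noncomputable def sconv (S : Set ℕ) (f g : ℕ → ℂ) (n : ℕ) : ℂ :=
  ∑ d ∈ n.divisors, rho S (Nat.gcd d (n / d)) * f d * g (n / d)

/-- A multiplicative arithmetic function. -/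
def IsMult (f : ℕ → ℂ) : Prop :=
  f 1 = 1 ∧ ∀ m n : ℕ, Nat.Coprime m n → f (m * n) = f m * f n

noncomputable def dl (a : ℕ) : ℕ → ℂ := fun n => if n = a then 1 else 0

lemma sconv_dl_dl (S : Set ℕ) (a b : ℕ) (ha : a ≠ 0) (hb : b ≠ 0) :
    sconv S (dl a) (dl b) = fun n => rho S (Nat.gcd a b) * dl (a * b) n := by
  funext n
  simp only [sconv, dl]
  by_cases hn : n = a * b
  · subst hn
    rw [Finset.sum_eq_single_of_mem a
      (Nat.mem_divisors.2 ⟨⟨b, rfl⟩, mul_ne_zero ha hb⟩)]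
    · rw [Nat.mul_div_cancel_left b (Nat.pos_of_ne_zero ha)]
      simp
    · intro d _ hne
      simp [hne]
  · rw [if_neg hn, mul_zero]
    apply Finset.sum_eq_zero
    intro d hd
    by_cases hda : d = a
    · subst hda
      have hdvd : d ∣ n := (Nat.mem_divisors.1 hd).1
      have : n / d ≠ b := by
        intro h
        exact hn (by rw [← Nat.div_mul_cancel hdvd, h, mul_comm])
      simp [this]
    · simp [hda]

lemma sconv_smul_left (S : Set ℕ) (k : ℂ) (f g : ℕ → ℂ) :
    sconv S (fun n => k * f n) g = fun n => k * sconv S f g n := by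
  funext n
  simp only [sconv, Finset.mul_sum]
  exact Finset.sum_congr rfl fun d _ => by ring

lemma sconv_smul_right (S : Set ℕ) (k : ℂ) (f g : ℕ → ℂ) :
    sconv S f (fun n => k * g n) = fun n => k * sconv S f g n := by
  funext n
  simp only [sconv, Finset.mul_sum]
  exact Finset.sum_congr rfl fun d _ => by ring

lemma assoc_eq (S : Set ℕ)
    (hassoc : ∀ f g h : ℕ → ℂ, sconv S (sconv S f g) h = sconv S f (sconv S g h))
    (a b c : ℕ) (ha : a ≠ 0) (hb : b ≠ 0) (hc : c ≠ 0) :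
    rho S (Nat.gcd a b) * rho S (Nat.gcd (a * b) c)
      = rho S (Nat.gcd b c) * rho S (Nat.gcd a (b * c)) := by
  have H := congrFun (hassoc (dl a) (dl b) (dl c)) (a * b * c)
  rw [sconv_dl_dl S a b ha hb, sconv_dl_dl S b c hb hc,
      sconv_smul_left, sconv_smul_right,
      sconv_dl_dl S (a * b) c (mul_ne_zero ha hb) hc,
      sconv_dl_dl S a (b * c) ha (mul_ne_zero hb hc)] at H
  simp only [dl, mul_assoc] at H ⊢
  simpa using H

theorem primePow_upward_of_sconv_assoc (S : Set ℕ) (hS1 : 1 ∈ S)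
    (hassoc : ∀ f g h : ℕ → ℂ, sconv S (sconv S f g) h = sconv S f (sconv S g h)) :
    ∀ p : ℕ, p.Prime → ∀ j : ℕ, 1 ≤ j → p ^ j ∈ S → ∀ ℓ : ℕ, j < ℓ → p ^ ℓ ∈ S := by
  intro p hp j hj hjS ℓ hℓ
  have hp0 : p ≠ 0 := hp.ne_zero
  -- key step: p^k ∈ S, 1 ≤ k ⇒ p^(k+1) ∈ S
  have step : ∀ k : ℕ, 1 ≤ k → p ^ k ∈ S → p ^ (k + 1) ∈ S := by
    intro k hk hkS
    have H := assoc_eq S hassoc (p ^ (k + 1)) (p ^ k) (p ^ k)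
      (pow_ne_zero _ hp0) (pow_ne_zero _ hp0) (pow_ne_zero _ hp0)
    have g1 : Nat.gcd (p ^ (k + 1)) (p ^ k) = p ^ k :=
      Nat.gcd_eq_right (pow_dvd_pow p (Nat.le_succ k))
    have g2 : Nat.gcd (p ^ (k + 1) * p ^ k) (p ^ k) = p ^ k :=
      Nat.gcd_eq_right (dvd_mul_left _ _)
    have g3 : Nat.gcd (p ^ k) (p ^ k) = p ^ k := Nat.gcd_self _
    have g4 : Nat.gcd (p ^ (k + 1)) (p ^ k * p ^ k) = p ^ (k + 1) := by
      apply Nat.gcd_eq_left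
      rw [← pow_add]
      exact pow_dvd_pow p (by omega)
    rw [g1, g2, g3, g4] at H
    have hrk : rho S (p ^ k) = 1 := if_pos hkS
    rw [hrk, one_mul, one_mul] at H
    by_contra hnot
    rw [rho, if_neg hnot] at H
    simp at H
  -- now induct up from j to ℓ
  have : ∀ m : ℕ, j ≤ m → p ^ m ∈ S := by
    intro m hm
    induction m, hm using Nat.le_induction with
    | base => exact hjS
    | succ n hn ih => exact step n (le_trans hj hn) ih
  exact this ℓ (le_of_lt hℓ)
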